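/- (Positivity of the derivative of the potential at the horizon for near-superradiant frequencies.) There exist constants β > 0 and b > 0 depending only on m and a such that for every admissible triple (ξ_τ, ξ_φ, Λ) satisfying −ξ_τ ξ_φ ≤ ω_H ξ_φ² + βΛ², one has V′(r₊) ≥ bΛ². -/

import Mathlib

open Real Set

noncomputable section

/-- The Kerr horizon function `Δ(r) = r² − 2mr + a²`. -/
def kerrDelta (m a r : ℝ) : ℝ := r ^ 2 - 2 * m * r + a ^ 2

/-- The larger root `r₊ = m + √(m² − a²)` of `Δ`. -/
def kerrRp (m a : ℝ) : ℝ := m + Real.sqrt (m ^ 2 - a ^ 2)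

/-- The horizon angular velocity `ω_H = a/(2 m r₊)`. -/
def kerrOmegaH (m a : ℝ) : ℝ := a / (2 * m * kerrRp m a)

/-- The Kerr frequency potential `V`. -/
def kerrV (m a ξτ ξφ Λ r : ℝ) : ℝ :=
  (kerrDelta m a r * Λ ^ 2 - 4 * a * m * r * ξτ * ξφ - a ^ 2 * ξφ ^ 2) / (r ^ 2 + a ^ 2) ^ 2

/-!
At a root `r₊` of `Δ` one has `r₊² + a² = 2mr₊`, so the quotient rule gives
`V′(r₊) = P / (2m³r₊²)` with `P = m(r₊ − m)Λ² + 2am(2r₊ − m)ξτξφ + a²ξφ²`.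
The near-superradiant condition bounds `ξτξφ` below by `−ω_H ξφ² − βΛ²`; as `ω_H = a/(2mr₊)`,
the `ξφ²` terms then combine to `−a²(r₊ − m)ξφ²/r₊ ≥ −a²(r₊ − m)Λ²/r₊`, leaving
`P ≥ ((r₊ − m)(mr₊ − a²)/r₊ − 2am(2r₊ − m)β) Λ²`. For `a < m` both `r₊ − m = √(m² − a²)` and
`mr₊ − a²` are positive, and `β = (r₊ − m)(mr₊ − a²)/(4m²r₊(2r₊ − m))` keeps, since `a ≤ m`,
at least half of this gap.
-/

section Horizon

variable {m a : ℝ}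

lemma kerrDelta_kerrRp (h : a ^ 2 ≤ m ^ 2) : kerrDelta m a (kerrRp m a) = 0 := by
  have := Real.sq_sqrt (sub_nonneg.2 h)
  unfold kerrDelta kerrRp
  linear_combination this

lemma lt_kerrRp (h : a ^ 2 < m ^ 2) : m < kerrRp m a :=
  lt_add_of_pos_right m (Real.sqrt_pos.2 (sub_pos.2 h))

end Horizon

section Potential

variable {m a ξτ ξφ Λ r : ℝ}

lemma hasDerivAt_kerrV (h : r ^ 2 + a ^ 2 ≠ 0) :
    HasDerivAt (kerrV m a ξτ ξφ Λ)
      ((((2 * r - 2 * m) * Λ ^ 2 - 4 * a * m * ξτ * ξφ) * (r ^ 2 + a ^ 2) ^ 2 -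
          (kerrDelta m a r * Λ ^ 2 - 4 * a * m * r * ξτ * ξφ - a ^ 2 * ξφ ^ 2) *
            (4 * r * (r ^ 2 + a ^ 2))) / ((r ^ 2 + a ^ 2) ^ 2) ^ 2) r := by
  have hnum : HasDerivAt
      (fun r => kerrDelta m a r * Λ ^ 2 - 4 * a * m * r * ξτ * ξφ - a ^ 2 * ξφ ^ 2)
      ((2 * r - 2 * m) * Λ ^ 2 - 4 * a * m * ξτ * ξφ) r := by
    unfold kerrDelta
    refine (((((hasDerivAt_pow 2 r).sub ((hasDerivAt_id' r).const_mul (2 * m))).add_const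
      (a ^ 2)).mul_const (Λ ^ 2)).sub ((((hasDerivAt_id' r).const_mul (4 * a * m)).mul_const
      ξτ).mul_const ξφ)).sub_const (a ^ 2 * ξφ ^ 2) |>.congr_deriv ?_
    push_cast
    ring
  have hden : HasDerivAt (fun r => (r ^ 2 + a ^ 2) ^ 2) (4 * r * (r ^ 2 + a ^ 2)) r := by
    refine (((hasDerivAt_pow 2 r).add_const (a ^ 2)).pow 2).congr_deriv ?_
    push_cast
    ring
  exact hnum.div hden (pow_ne_zero 2 h)

lemma deriv_kerrV_of_kerrDelta_eq_zero (hm : m ≠ 0) (hr : r ≠ 0) (hΔ : kerrDelta m a r = 0) :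
    deriv (kerrV m a ξτ ξφ Λ) r =
      (m * (r - m) * Λ ^ 2 + 2 * a * m * (2 * r - m) * (ξτ * ξφ) + a ^ 2 * ξφ ^ 2) /
        (2 * m ^ 3 * r ^ 2) := by
  have hsq : r ^ 2 + a ^ 2 = 2 * m * r := by unfold kerrDelta at hΔ; linear_combination hΔ
  rw [(hasDerivAt_kerrV (by rw [hsq]; positivity)).deriv, hΔ, hsq]
  field_simp
  ring

lemma kerr_horizon_numerator_lower_bound (hm : 0 < m) (ha : 0 ≤ a) (ham : a ≤ m)
    (hmr : m ≤ r) (hφ : ξφ ^ 2 ≤ Λ ^ 2)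
    (hξ : -(ξτ * ξφ) ≤ a / (2 * m * r) * ξφ ^ 2 +
      (r - m) * (m * r - a ^ 2) / (4 * m ^ 2 * r * (2 * r - m)) * Λ ^ 2) :
    (r - m) * (m * r - a ^ 2) / (2 * r) * Λ ^ 2 ≤
      m * (r - m) * Λ ^ 2 + 2 * a * m * (2 * r - m) * (ξτ * ξφ) + a ^ 2 * ξφ ^ 2 := by
  have hr : 0 < r := hm.trans_le hmr
  have h2r : 0 < 2 * r - m := by linarith
  have hξ' : -(4 * m ^ 2 * r * (2 * r - m) * (ξτ * ξφ)) ≤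
      2 * a * m * (2 * r - m) * ξφ ^ 2 + (r - m) * (m * r - a ^ 2) * Λ ^ 2 := by
    field_simp at hξ
    linarith
  have hgap : 0 ≤ (r - m) * (m * r - a ^ 2) * Λ ^ 2 :=
    mul_nonneg (mul_nonneg (by linarith) (by nlinarith)) (sq_nonneg Λ)
  rw [div_mul_eq_mul_div, div_le_iff₀ (by positivity)]
  nlinarith [mul_le_mul_of_nonneg_left hξ' ha,
    mul_le_mul_of_nonneg_left hφ (mul_nonneg (by positivity) (sub_nonneg.2 hmr)),
    mul_le_mul_of_nonneg_right ham hgap]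

end Potential

/-- Positivity of the derivative of the potential at the horizon for near-superradiant
frequencies: there are constants `β, b > 0` depending only on `m, a` such that for every
admissible triple satisfying `−ξτ ξφ ≤ ω_H ξφ² + β Λ²`, one has `V′(r₊) ≥ b Λ²`. -/
theorem kerr_deriv_potential_pos_at_horizon (m a : ℝ)
    (hm : 0 < m) (ha0 : 0 ≤ a) (ham : a < m) :
    ∃ β > (0 : ℝ), ∃ b > (0 : ℝ), ∀ ξτ ξφ Λ : ℝ,
      0 ≤ Λ → ξφ ^ 2 ≤ Λ ^ 2 → 2 * |a * ξτ * ξφ| ≤ Λ ^ 2 →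
      -(ξτ * ξφ) ≤ kerrOmegaH m a * ξφ ^ 2 + β * Λ ^ 2 →
      b * Λ ^ 2 ≤ deriv (kerrV m a ξτ ξφ Λ) (kerrRp m a) := by
  have ham2 : a ^ 2 < m ^ 2 := by nlinarith
  have hΔ := kerrDelta_kerrRp ham2.le
  set r := kerrRp m a
  have hmr : m < r := lt_kerrRp ham2
  have hr : 0 < r := hm.trans hmr
  have h2r : 0 < 2 * r - m := by linarith
  have hgap : 0 < (r - m) * (m * r - a ^ 2) := mul_pos (by linarith) (by nlinarith)
  refine ⟨(r - m) * (m * r - a ^ 2) / (4 * m ^ 2 * r * (2 * r - m)), by positivity,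
    (r - m) * (m * r - a ^ 2) / (2 * r) / (2 * m ^ 3 * r ^ 2), by positivity,
    fun ξτ ξφ Λ _ hφ _ hξ => ?_⟩
  rw [deriv_kerrV_of_kerrDelta_eq_zero hm.ne' hr.ne' hΔ, div_mul_eq_mul_div]
  exact div_le_div_of_nonneg_right
    (kerr_horizon_numerator_lower_bound hm ha0 ham.le hmr.le hφ hξ) (by positivity)
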